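/- Let B ∈ ℝ^K, v ∈ ℝ^K (a list of distinct values), α > 0, and data y_1,…,y_N ∈ {v_1,…,v_K} with nonnegative weights w. Define tables B^1_k = w_1|v_k − y_1| and B^n_k = w_n|v_k − y_n| + min_l (B^{n−1}_l + α|v_k − v_l|) for n = 2,…,N. Then min_k B^N_k equals the minimum over x ∈ {v_1,…,v_K}^N of the energy α Σ_{n=1}^{N-1} |x_n − x_{n+1}| + Σ_{n=1}^N w_n |x_n − y_n|. -/

import Mathlib

/-!
Cutting an optimal path before its last node leaves an optimal path of the truncated problem
ending in the previous node, so the cheapest paths ending in `k` at time `n + 1` cost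
`u (n + 1) k + min_l (cheapest cost ending in l at time n + p l k)`: this is the Bellman recursion
defining the table. Minimizing over the final node then gives the global minimum.
-/

open Finset

namespace Finset

theorem inf'_add {ι R : Type*} [LinearOrder R] [Add R] [AddRightMono R] (s : Finset ι)
    (hs : s.Nonempty) (f : ι → R) (a : R) :
    s.inf' hs f + a = s.inf' hs fun i ↦ f i + a :=
  apply_inf'_eq_inf'_comp hs (· + a) fun x y ↦ (min_add_add_right x y a).symm

end Finset

namespace Fin

theorem inf'_univ_eq_inf'_inf'_snoc {α β : Type*} [Fintype α] [Nonempty α] [SemilatticeInf β]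
    {n : ℕ} (f : (Fin (n + 1) → α) → β) :
    univ.inf' univ_nonempty f =
      univ.inf' univ_nonempty fun k : α ↦ univ.inf' univ_nonempty fun x : Fin n → α ↦
        f (Fin.snoc x k) := by
  refine le_antisymm (le_inf' _ _ fun k _ ↦ le_inf' _ _ fun x _ ↦ inf'_le _ (mem_univ _)) ?_
  refine le_inf' _ _ fun x _ ↦ ?_
  calc univ.inf' univ_nonempty (fun k : α ↦ univ.inf' univ_nonempty fun y : Fin n → α ↦
          f (Fin.snoc y k))
      ≤ univ.inf' univ_nonempty fun y : Fin n → α ↦ f (Fin.snoc y (x (Fin.last n))) :=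
        inf'_le _ (mem_univ _)
    _ ≤ f (Fin.snoc (Fin.init x) (x (Fin.last n))) := inf'_le _ (mem_univ _)
    _ = f x := by rw [Fin.snoc_init_self]

end Fin

section Viterbi

variable {ι R : Type*} [AddCommMonoid R] (u : ℕ → ι → R) (p : ι → ι → R)

def pathCost {n : ℕ} (x : Fin (n + 1) → ι) : R :=
  ∑ i : Fin n, p (x i.castSucc) (x i.succ) + ∑ i : Fin (n + 1), u i (x i)

theorem pathCost_snoc {n : ℕ} (x : Fin (n + 1) → ι) (k : ι) :
    pathCost u p (Fin.snoc x k : Fin (n + 2) → ι) =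
      pathCost u p x + p (x (Fin.last n)) k + u (n + 1) k := by
  simp only [pathCost, Fin.sum_univ_castSucc (n := n), Fin.sum_univ_castSucc (n := n + 1),
    Fin.snoc_castSucc, Fin.snoc_last, Fin.succ_last, Fin.val_castSucc, Fin.val_last,
    ← Fin.castSucc_succ]
  abel

variable [Fintype ι] [Nonempty ι] [LinearOrder R]

def viterbiTable : ℕ → ι → R
  | 0 => u 0
  | n + 1 => fun k ↦ u (n + 1) k + univ.inf' univ_nonempty fun l ↦ viterbiTable n l + p l k

theorem eq_viterbiTable_of_recursion {N : ℕ} (B : Fin N → ι → R)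
    (h₀ : ∀ (h : 0 < N) (k : ι), B ⟨0, h⟩ k = u 0 k)
    (h_succ : ∀ (n : ℕ) (h : n + 1 < N) (k : ι),
      B ⟨n + 1, h⟩ k = u (n + 1) k + univ.inf' univ_nonempty fun l ↦ B ⟨n, by omega⟩ l + p l k)
    (n : ℕ) (hn : n < N) : B ⟨n, hn⟩ = viterbiTable u p n := by
  induction n with
  | zero => exact funext (h₀ hn)
  | succ n ih =>
    funext k
    simp only [h_succ n hn, ih (by omega), viterbiTable]

variable [IsOrderedAddMonoid R]

theorem viterbiTable_eq_inf'_pathCost (n : ℕ) (k : ι) :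
    viterbiTable u p n k =
      univ.inf' univ_nonempty fun x : Fin n → ι ↦ pathCost u p (Fin.snoc x k) := by
  induction n generalizing k with
  | zero => simp [viterbiTable, pathCost, Fin.snoc]
  | succ n ih =>
    calc viterbiTable u p (n + 1) k
        = (univ.inf' univ_nonempty fun l ↦ univ.inf' univ_nonempty fun x : Fin n → ι ↦
            pathCost u p (Fin.snoc x l) + p l k) + u (n + 1) k := by
          simp only [viterbiTable, ih, inf'_add, add_comm (u (n + 1) k)]
      _ = (univ.inf' univ_nonempty fun y : Fin (n + 1) → ι ↦
            pathCost u p y + p (y (Fin.last n)) k) + u (n + 1) k := by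
          rw [Fin.inf'_univ_eq_inf'_inf'_snoc]
          simp only [Fin.snoc_last]
      _ = _ := by simp only [inf'_add, pathCost_snoc]

theorem inf'_viterbiTable_eq_inf'_pathCost (n : ℕ) :
    univ.inf' univ_nonempty (viterbiTable u p n) =
      univ.inf' univ_nonempty (pathCost u p (n := n)) := by
  simp only [viterbiTable_eq_inf'_pathCost, ← Fin.inf'_univ_eq_inf'_inf'_snoc]

end Viterbi

theorem viterbi_tabulation_l1tv_correct
    (K N : ℕ) (hK : 0 < K) (hN : 0 < N)
    (v : Fin K → ℝ)
    (y w : Fin N → ℝ)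
    (α : ℝ)
    (Btab : Fin N → Fin K → ℝ)
    (hB1 : ∀ k, Btab ⟨0, hN⟩ k = w ⟨0, hN⟩ * |v k - y ⟨0, hN⟩|)
    (hBn : ∀ (n : ℕ) (h : n + 1 < N) (k : Fin K),
      Btab ⟨n + 1, h⟩ k = w ⟨n + 1, h⟩ * |v k - y ⟨n + 1, h⟩| +
        Finset.univ.inf' ⟨⟨0, hK⟩, Finset.mem_univ _⟩
          (fun l => Btab ⟨n, by omega⟩ l + α * |v k - v l|)) :
    Finset.univ.inf' ⟨⟨0, hK⟩, Finset.mem_univ _⟩ (Btab ⟨N - 1, by omega⟩) =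
      Finset.univ.inf' ⟨fun _ => ⟨0, hK⟩, Finset.mem_univ _⟩
        (fun ξ : Fin N → Fin K =>
          α * ∑ i : Fin (N - 1),
              |v (ξ ⟨i, by have := i.isLt; omega⟩) - v (ξ ⟨(i : ℕ) + 1, by have := i.isLt; omega⟩)| +
            ∑ n, w n * |v (ξ n) - y n|) := by
  have : Nonempty (Fin K) := ⟨⟨0, hK⟩⟩
  obtain ⟨M, rfl⟩ : ∃ M, N = M + 1 := ⟨N - 1, by omega⟩
  -- the fidelity term is extended by `0` past the horizon `M`, where it is never evaluated
  let u : ℕ → Fin K → ℝ := fun n k ↦ if h : n < M + 1 then w ⟨n, h⟩ * |v k - y ⟨n, h⟩| else 0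
  let p : Fin K → Fin K → ℝ := fun l k ↦ α * |v k - v l|
  have hu : ∀ n (h : n < M + 1) k, u n k = w ⟨n, h⟩ * |v k - y ⟨n, h⟩| := fun n h _ ↦ dif_pos h
  have hB : Btab ⟨M, by omega⟩ = viterbiTable u p M :=
    eq_viterbiTable_of_recursion u p Btab (fun h k ↦ (hB1 k).trans (hu 0 h k).symm)
      (fun n h k ↦ (hBn n h k).trans (congrArg (· + _) (hu (n + 1) h k).symm)) M (by omega)
  refine (hB ▸ inf'_viterbiTable_eq_inf'_pathCost u p M).trans (inf'_congr _ rfl fun ξ _ ↦ ?_)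
  simp only [pathCost, p, hu _ (Fin.is_lt _), mul_sum, abs_sub_comm (v (ξ (Fin.succ _)))]
  rfl
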